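/- For the complete bipartite graph K_{r_1, r_2} with r_1, r_2 ≥ 1 and r_1 + r_2 ≥ 3, the edge metric dimension is r_1 + r_2 - 2. -/

import Mathlib

open SimpleGraph

variable {V W : Type*}

/-- Distance (in `ℕ∞`) from a vertex to an edge: the minimum of the distances
to the two endpoints. -/
noncomputable def edgeDist (G : SimpleGraph V) (v : V) (e : Sym2 V) : ℕ∞ :=
  Sym2.lift ⟨fun a b => min (G.edist v a) (G.edist v b),
    fun a b => min_comm _ _⟩ e

/-- A set of vertices is an edge metric generator if every pair of distinct
edges is distinguished by some vertex of the set. -/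
def IsEdgeMetricGenerator (G : SimpleGraph V) (S : Set V) : Prop :=
  ∀ e₁ ∈ G.edgeSet, ∀ e₂ ∈ G.edgeSet, e₁ ≠ e₂ →
    ∃ w ∈ S, edgeDist G w e₁ ≠ edgeDist G w e₂

/-- The edge metric dimension: minimum cardinality of an edge metric generator. -/
noncomputable def edim (G : SimpleGraph V) : ℕ :=
  sInf {n | ∃ S : Set V, S.ncard = n ∧ IsEdgeMetricGenerator G S}


/-- The join of two graphs: disjoint union plus all edges across. -/
def joinGraph (G : SimpleGraph V) (H : SimpleGraph W) : SimpleGraph (V ⊕ W) where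
  Adj x y := match x, y with
    | .inl a, .inl b => G.Adj a b
    | .inr a, .inr b => H.Adj a b
    | .inl _, .inr _ => True
    | .inr _, .inl _ => True
  symm := by constructor; rintro (a | a) (b | b) h <;> simp_all [SimpleGraph.adj_comm]
  loopless := by
    constructor
    rintro (a | a) h
    · exact h.ne rfl
    · exact h.ne rfl

/-- A total dominating set: every vertex has a neighbor in the set. -/
def IsTotalDomSet (G : SimpleGraph V) (D : Set V) : Prop :=
  ∀ v : V, ∃ d ∈ D, G.Adj v d

/-- The total domination number. -/
noncomputable def totalDomNum (G : SimpleGraph V) : ℕ :=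
  sInf {n | ∃ D : Set V, D.ncard = n ∧ IsTotalDomSet G D}

/-- The class 𝒢: for every vertex `u` there is a neighbor `v`
such that `{u, v}` is a minimum total dominating set. -/
def InClassG (G : SimpleGraph V) : Prop :=
  ∀ u : V, ∃ v : V, G.Adj u v ∧ IsTotalDomSet G {u, v} ∧
    ({u, v} : Set V).ncard = totalDomNum G

/-- Lexicographic product `G[H]`. -/
def lexProd (G : SimpleGraph V) (H : SimpleGraph W) : SimpleGraph (V × W) where
  Adj x y := G.Adj x.1 y.1 ∨ (x.1 = y.1 ∧ H.Adj x.2 y.2)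
  symm := by constructor; rintro ⟨g, h⟩ ⟨g', h'⟩ (hadj | ⟨rfl, hadj⟩)
             · exact Or.inl hadj.symm
             · exact Or.inr ⟨rfl, hadj.symm⟩
  loopless := by constructor; rintro ⟨g, h⟩ (hadj | ⟨-, hadj⟩)
                 · exact hadj.ne rfl
                 · exact hadj.ne rfl

/-- Corona product `G ⊙ H`: vertex `(g, none)` is the vertex `g` of `G`, and
`(g, some h)` is the vertex `h` of the copy of `H` attached to `g`. -/
def corona (G : SimpleGraph V) (H : SimpleGraph W) : SimpleGraph (V × Option W) where
  Adj x y := match x, y with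
    | (g, none), (g', none) => G.Adj g g'
    | (g, none), (g', some _) => g = g'
    | (g, some _), (g', none) => g = g'
    | (g, some h), (g', some h') => g = g' ∧ H.Adj h h'
  symm := by constructor; rintro ⟨g, (_ | h)⟩ ⟨g', (_ | h')⟩ hadj <;>
             simp_all [SimpleGraph.adj_comm, eq_comm]
  loopless := by constructor; rintro ⟨g, (_ | h)⟩ hadj <;> simp_all

/-- The closed neighborhood of a vertex. -/
def closedNbhd (G : SimpleGraph V) (u : V) : Set V :=
  insert u (G.neighborSet u)

/-- `u` and `v` are false twins: equal open neighborhoods. -/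
def FalseTwin (G : SimpleGraph V) (u v : V) : Prop :=
  G.neighborSet u = G.neighborSet v

/-- `u` and `v` are true twins: equal closed neighborhoods. -/
def TrueTwin (G : SimpleGraph V) (u v : V) : Prop :=
  closedNbhd G u = closedNbhd G v

/-- The union of the closed neighborhoods of the two endpoints of an edge. -/
def edgeNbhd (G : SimpleGraph V) : Sym2 V → Set V :=
  Sym2.lift ⟨fun a b => closedNbhd G a ∪ closedNbhd G b, fun _ _ => Set.union_comm _ _⟩

/-- Two edges are twin edges: `N[u] ∪ N[v] = N[x] ∪ N[y]`. -/
def TwinEdges (G : SimpleGraph V) (e f : Sym2 V) : Prop :=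
  edgeNbhd G e = edgeNbhd G f

/-- The set of edges lying in nontrivial edge-twin classes. -/
def nontrivTwinEdges (G : SimpleGraph V) : Set (Sym2 V) :=
  {e ∈ G.edgeSet | ∃ f ∈ G.edgeSet, f ≠ e ∧ TwinEdges G e f}

/-- `q(G)`: the number of edges lying in nontrivial edge-twin classes. -/
noncomputable def qval (G : SimpleGraph V) : ℕ := (nontrivTwinEdges G).ncard

/-- `q'(G) = q(G) - m`, where `m` is the number of nontrivial edge-twin classes. -/
noncomputable def q'val (G : SimpleGraph V) : ℕ :=
  qval G - (edgeNbhd G '' nontrivTwinEdges G).ncard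

/-- The set of vertices lying in nontrivial false-twin classes. -/
def nontrivFalseTwins (G : SimpleGraph V) : Set V :=
  {v | ∃ u, u ≠ v ∧ FalseTwin G u v}

/-- The set of vertices lying in nontrivial true-twin classes. -/
def nontrivTrueTwins (G : SimpleGraph V) : Set V :=
  {v | ∃ u, u ≠ v ∧ TrueTwin G u v}

/-- `f'(G) = f(G) - k`: vertices in nontrivial false-twin classes minus the
number of such classes. -/
noncomputable def f'val (G : SimpleGraph V) : ℕ :=
  (nontrivFalseTwins G).ncard - (G.neighborSet '' nontrivFalseTwins G).ncard

/-- `t'(G) = t(G) - ℓ`: vertices in nontrivial true-twin classes minus the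
number of such classes. -/
noncomputable def t'val (G : SimpleGraph V) : ℕ :=
  (nontrivTrueTwins G).ncard - (closedNbhd G '' nontrivTrueTwins G).ncard

/-- A set of representatives for the twin deletion operation: it contains
exactly one vertex from each (false- or true-) twin equivalence class. -/
def IsTwinDeletionSet (G : SimpleGraph V) (R : Set V) : Prop :=
  ∀ v : V, ∃! r : V, r ∈ R ∧ (FalseTwin G v r ∨ TrueTwin G v r)


/-!
In `K_{α,β}` every vertex is adjacent to an endpoint of every edge, so its distance to an edge is
`0` if it is an endpoint and `1` otherwise: a vertex distinguishes two edges exactly when it is an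
endpoint of just one of them. If a set misses two vertices `y, z` on one side, the edges `xy` and
`xz` (for any `x` on the other side) are not distinguished; a set missing at most one vertex on
each side distinguishes all edges. So a smallest generator omits one vertex from each side.
-/

theorem Set.ncard_preimage_inl_add_ncard_preimage_inr {α β : Type*} (s : Set (α ⊕ β))
    (hs : s.Finite := by toFinite_tac) :
    (Sum.inl ⁻¹' s).ncard + (Sum.inr ⁻¹' s).ncard = s.ncard := by
  conv_rhs => rw [← Set.image_preimage_inl_union_image_preimage_inr s]
  rw [Set.ncard_union_eq Set.disjoint_image_inl_image_inr
      (hs.subset (Set.image_preimage_subset _ _)) (hs.subset (Set.image_preimage_subset _ _)),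
    Set.ncard_image_of_injective _ Sum.inl_injective,
    Set.ncard_image_of_injective _ Sum.inr_injective]

theorem Set.Subsingleton.mem_or_mem_of_compl {α : Type*} {s : Set α} (hs : sᶜ.Subsingleton)
    {x y : α} (hxy : x ≠ y) : x ∈ s ∨ y ∈ s := by
  by_contra! h
  exact hxy (hs h.1 h.2)

section edgeDist

variable (G : SimpleGraph V)

theorem edgeDist_mk (v a b : V) : edgeDist G v s(a, b) = min (G.edist v a) (G.edist v b) :=
  rfl

theorem edgeDist_eq_zero_iff {v : V} {e : Sym2 V} : edgeDist G v e = 0 ↔ v ∈ e := by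
  induction e using Sym2.ind with
  | _ a b => simp [edgeDist_mk, min_eq_zero]

theorem edgeDist_le_one_of_adj {v x : V} {e : Sym2 V} (hx : x ∈ e) (hvx : G.Adj v x) :
    edgeDist G v e ≤ 1 := by
  induction e using Sym2.ind with
  | _ a b =>
    rw [edgeDist_mk, ← edist_eq_one_iff_adj.mpr hvx]
    rcases Sym2.mem_iff.mp hx with rfl | rfl
    exacts [min_le_left _ _, min_le_right _ _]

end edgeDist

section completeBipartite

variable {α β : Type*}

theorem exists_eq_mk_of_mem_edgeSet_completeBipartiteGraph {e : Sym2 (α ⊕ β)}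
    (he : e ∈ (completeBipartiteGraph α β).edgeSet) : ∃ a b, e = s(Sum.inl a, Sum.inr b) := by
  induction e using Sym2.ind with
  | _ x y =>
    rcases x with a | b <;> rcases y with a' | b' <;> simp_all [Sym2.eq_swap]

theorem edgeDist_completeBipartiteGraph_eq_one {e : Sym2 (α ⊕ β)}
    (he : e ∈ (completeBipartiteGraph α β).edgeSet) {w : α ⊕ β} (hw : w ∉ e) :
    edgeDist (completeBipartiteGraph α β) w e = 1 := by
  obtain ⟨a, b, rfl⟩ := exists_eq_mk_of_mem_edgeSet_completeBipartiteGraph he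
  have hle : edgeDist (completeBipartiteGraph α β) w s(Sum.inl a, Sum.inr b) ≤ 1 := by
    rcases w with a' | b'
    · exact edgeDist_le_one_of_adj _ (Sym2.mem_mk_right _ _) (by simp)
    · exact edgeDist_le_one_of_adj _ (Sym2.mem_mk_left _ _) (by simp)
  exact (Order.le_one_iff.mp hle).resolve_left (mt (edgeDist_eq_zero_iff _).mp hw)

theorem edgeDist_completeBipartiteGraph_eq_iff {e₁ e₂ : Sym2 (α ⊕ β)}
    (he₁ : e₁ ∈ (completeBipartiteGraph α β).edgeSet)
    (he₂ : e₂ ∈ (completeBipartiteGraph α β).edgeSet) {w : α ⊕ β} :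
    edgeDist (completeBipartiteGraph α β) w e₁ = edgeDist (completeBipartiteGraph α β) w e₂ ↔
      (w ∈ e₁ ↔ w ∈ e₂) := by
  by_cases hw₁ : w ∈ e₁ <;> by_cases hw₂ : w ∈ e₂ <;>
    simp [hw₁, hw₂, (edgeDist_eq_zero_iff _).mpr, edgeDist_completeBipartiteGraph_eq_one,
      he₁, he₂]

theorem IsEdgeMetricGenerator.mem_or_mem_of_adj_of_adj {S : Set (α ⊕ β)}
    (hS : IsEdgeMetricGenerator (completeBipartiteGraph α β) S) {x y z : α ⊕ β}
    (hxy : (completeBipartiteGraph α β).Adj x y) (hxz : (completeBipartiteGraph α β).Adj x z)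
    (hyz : y ≠ z) : y ∈ S ∨ z ∈ S := by
  obtain ⟨w, hwS, hw⟩ := hS s(x, y) hxy s(x, z) hxz (mt Sym2.congr_right.mp hyz)
  rw [Ne, edgeDist_completeBipartiteGraph_eq_iff hxy hxz] at hw
  simp only [Sym2.mem_iff] at hw
  obtain rfl | rfl : w = y ∨ w = z := by tauto
  exacts [Or.inl hwS, Or.inr hwS]

theorem isEdgeMetricGenerator_completeBipartiteGraph_iff [Nonempty α] [Nonempty β]
    {S : Set (α ⊕ β)} :
    IsEdgeMetricGenerator (completeBipartiteGraph α β) S ↔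
      (Sum.inl ⁻¹' S)ᶜ.Subsingleton ∧ (Sum.inr ⁻¹' S)ᶜ.Subsingleton := by
  constructor
  · intro hS
    refine ⟨fun a ha a' ha' => ?_, fun b hb b' hb' => ?_⟩ <;> by_contra hne
    · have := hS.mem_or_mem_of_adj_of_adj (x := .inr (Classical.arbitrary β))
        (y := .inl a) (z := .inl a') (by simp) (by simp) (by simpa using hne)
      tauto
    · have := hS.mem_or_mem_of_adj_of_adj (x := .inl (Classical.arbitrary α))
        (y := .inr b) (z := .inr b') (by simp) (by simp) (by simpa using hne)
      tauto
  · rintro ⟨hl, hr⟩ e₁ he₁ e₂ he₂ hne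
    obtain ⟨a, b, rfl⟩ := exists_eq_mk_of_mem_edgeSet_completeBipartiteGraph he₁
    obtain ⟨a', b', rfl⟩ := exists_eq_mk_of_mem_edgeSet_completeBipartiteGraph he₂
    simp_rw [Ne, edgeDist_completeBipartiteGraph_eq_iff he₁ he₂]
    by_cases ha : a = a'
    · subst ha
      have hb : b ≠ b' := fun h => hne (h ▸ rfl)
      rcases hr.mem_or_mem_of_compl hb with h | h
      exacts [⟨_, h, by simp [hb]⟩, ⟨_, h, by simp [hb.symm]⟩]
    · rcases hl.mem_or_mem_of_compl ha with h | h
      exacts [⟨_, h, by simp [ha]⟩, ⟨_, h, by simp [Ne.symm ha]⟩]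

theorem ncard_le_of_isEdgeMetricGenerator_completeBipartiteGraph [Finite α] [Finite β]
    [Nonempty α] [Nonempty β] {S : Set (α ⊕ β)}
    (hS : IsEdgeMetricGenerator (completeBipartiteGraph α β) S) :
    Nat.card α + Nat.card β - 2 ≤ S.ncard := by
  obtain ⟨hl, hr⟩ := isEdgeMetricGenerator_completeBipartiteGraph_iff.mp hS
  have hcompl : Sᶜ.ncard ≤ 2 := by
    rw [← Set.ncard_preimage_inl_add_ncard_preimage_inr]
    exact add_le_add (Set.ncard_le_one_iff_subsingleton.mpr hl)
      (Set.ncard_le_one_iff_subsingleton.mpr hr)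
  have := Set.ncard_add_ncard_compl S
  rw [Nat.card_sum] at this
  omega

theorem isEdgeMetricGenerator_completeBipartiteGraph_compl_pair (a : α) (b : β) :
    IsEdgeMetricGenerator (completeBipartiteGraph α β) {Sum.inl a, Sum.inr b}ᶜ := by
  have : Nonempty α := ⟨a⟩
  have : Nonempty β := ⟨b⟩
  refine isEdgeMetricGenerator_completeBipartiteGraph_iff.mpr ⟨?_, ?_⟩ <;>
    simp [Set.preimage_compl, Set.Subsingleton]

theorem edim_completeBipartiteGraph [Finite α] [Finite β] [Nonempty α] [Nonempty β] :
    edim (completeBipartiteGraph α β) = Nat.card α + Nat.card β - 2 := by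
  obtain ⟨a⟩ := ‹Nonempty α›
  obtain ⟨b⟩ := ‹Nonempty β›
  have hgen := isEdgeMetricGenerator_completeBipartiteGraph_compl_pair a b
  have hcard : ({Sum.inl a, Sum.inr b}ᶜ : Set (α ⊕ β)).ncard = Nat.card α + Nat.card β - 2 := by
    rw [Set.ncard_compl, Set.ncard_pair Sum.inl_ne_inr, Nat.card_sum]
  refine le_antisymm (Nat.sInf_le ⟨_, hcard, hgen⟩) (le_csInf ⟨_, _, rfl, hgen⟩ ?_)
  rintro n ⟨S, rfl, hS⟩
  exact ncard_le_of_isEdgeMetricGenerator_completeBipartiteGraph hS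

end completeBipartite

theorem edim_completeBipartite_general (r₁ r₂ : ℕ) (h₁ : 1 ≤ r₁) (h₂ : 1 ≤ r₂) :
    edim (completeBipartiteGraph (Fin r₁) (Fin r₂)) = r₁ + r₂ - 2 := by
  have : Nonempty (Fin r₁) := ⟨⟨0, h₁⟩⟩
  have : Nonempty (Fin r₂) := ⟨⟨0, h₂⟩⟩
  simpa using edim_completeBipartiteGraph (α := Fin r₁) (β := Fin r₂)

theorem edim_completeBipartite (r₁ r₂ : ℕ) (h₁ : 1 ≤ r₁) (h₂ : 1 ≤ r₂)
    (h₃ : 3 ≤ r₁ + r₂) :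
    edim (completeBipartiteGraph (Fin r₁) (Fin r₂)) = r₁ + r₂ - 2 :=
  edim_completeBipartite_general r₁ r₂ h₁ h₂
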